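/- Let I be an ideal of A and let H be an ideal of the subring f(A)+J of B such that f(I)J ⊆ H ⊆ J. Then the set I⋈^f H := {(i, f(i)+h) : i ∈ I, h ∈ H} is an ideal of A⋈^f J. Moreover, for any ideal I of A, the extension I·(A⋈^f J) of I to A⋈^f J (i.e., the ideal of A⋈^f J generated by ι(I) = {(i, f(i)) : i ∈ I}) equals I⋈^f (f(I)B)J := {(i, f(i)+β) : i ∈ I, β ∈ (f(I)B)J}, where (f(I)B)J is the product in B of the ideal generated by f(I) with J. -/
import Mathlib


section Amalgamation

variable {A B : Type*} [CommRing A] [CommRing B]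

/-- The amalgamation `A ⋈^f J` of `A` with `B` along the ideal `J` of `B` with respect to
the ring homomorphism `f : A → B`, realized as the subring
`{(a, f a + j) | a ∈ A, j ∈ J}` of `A × B`. -/
def amalg (f : A →+* B) (J : Ideal B) : Subring (A × B) where
  carrier := {x : A × B | x.2 - f x.1 ∈ J}
  zero_mem' := by simp
  one_mem' := by simp
  add_mem' := by
    intro x y hx hy
    simp only [Set.mem_setOf_eq, Prod.fst_add, Prod.snd_add, map_add] at *
    have h : x.2 + y.2 - (f x.1 + f y.1) = x.2 - f x.1 + (y.2 - f y.1) := by ring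
    rw [h]; exact J.add_mem hx hy
  neg_mem' := by
    intro x hx
    simp only [Set.mem_setOf_eq, Prod.fst_neg, Prod.snd_neg, map_neg] at *
    have h : -x.2 - -f x.1 = -(x.2 - f x.1) := by ring
    rw [h]; exact J.neg_mem hx
  mul_mem' := by
    intro x y hx hy
    simp only [Set.mem_setOf_eq, Prod.fst_mul, Prod.snd_mul, map_mul] at *
    have h : x.2 * y.2 - f x.1 * f y.1 = x.2 * (y.2 - f y.1) + (x.2 - f x.1) * f y.1 := by ring
    rw [h]
    exact J.add_mem (J.mul_mem_left _ hy) (J.mul_mem_right _ hx)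

lemma mem_amalg_iff (f : A →+* B) (J : Ideal B) (x : A × B) :
    x ∈ amalg f J ↔ x.2 - f x.1 ∈ J := Iff.rfl

/-- The canonical embedding `ι : A → A ⋈^f J`, `a ↦ (a, f a)`. -/
def iota (f : A →+* B) (J : Ideal B) : A →+* amalg f J :=
  ((RingHom.id A).prod f).codRestrict (amalg f J) (fun a => by
    simp [mem_amalg_iff])

/-- The subring `f(A) + J` of `B`. -/
def fAJ (f : A →+* B) (J : Ideal B) : Subring B where
  carrier := {b : B | ∃ a : A, ∃ j ∈ J, b = f a + j}
  zero_mem' := ⟨0, 0, J.zero_mem, by simp⟩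
  one_mem' := ⟨1, 0, J.zero_mem, by simp⟩
  add_mem' := by
    rintro x y ⟨a, j, hj, rfl⟩ ⟨a', j', hj', rfl⟩
    exact ⟨a + a', j + j', J.add_mem hj hj', by rw [map_add]; ring⟩
  neg_mem' := by
    rintro x ⟨a, j, hj, rfl⟩
    exact ⟨-a, -j, J.neg_mem hj, by rw [map_neg]; ring⟩
  mul_mem' := by
    rintro x y ⟨a, j, hj, rfl⟩ ⟨a', j', hj', rfl⟩
    refine ⟨a * a', f a * j' + j * (f a' + j'), ?_, by rw [map_mul]; ring⟩
    exact J.add_mem (J.mul_mem_left _ hj') (J.mul_mem_right _ hj)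

lemma f_mem_fAJ (f : A →+* B) (J : Ideal B) (a : A) : f a ∈ fAJ f J :=
  ⟨a, 0, J.zero_mem, by ring⟩

end Amalgamation

section Aux

variable {A B : Type*} [CommRing A] [CommRing B]

lemma zero_mn_mem (f : A →+* B) (J : Ideal B) (I : Ideal A) {m : B}
    (hm : m ∈ Ideal.map f I) : ∀ n ∈ J,
    ∃ hmm : ((0 : A), m * n) ∈ amalg f J,
      (⟨((0 : A), m * n), hmm⟩ : amalg f J) ∈ Ideal.map (iota f J) I := by
  have hm' : m ∈ Ideal.span (f '' ↑I) := hm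
  clear hm
  induction hm' using Submodule.span_induction with
  | mem x hx =>
    obtain ⟨i, hi, rfl⟩ := hx
    intro n hn
    have hy : ((0 : A), n) ∈ amalg f J := by simpa [mem_amalg_iff] using hn
    have hmem : ((0 : A), f i * n) ∈ amalg f J := by
      simpa [mem_amalg_iff] using J.mul_mem_left (f i) hn
    refine ⟨hmem, ?_⟩
    have : (⟨((0 : A), f i * n), hmem⟩ : amalg f J) = iota f J i * ⟨((0 : A), n), hy⟩ := by
      apply Subtype.ext
      show ((0 : A), f i * n) = ((i, f i) : A × B) * ((0 : A), n)
      simp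
    rw [this]
    exact Ideal.mul_mem_right _ _ (Ideal.mem_map_of_mem _ hi)
  | zero =>
    intro n hn
    have hmem : ((0 : A), (0 : B) * n) ∈ amalg f J := by simp [mem_amalg_iff]
    refine ⟨hmem, ?_⟩
    have : (⟨((0 : A), (0 : B) * n), hmem⟩ : amalg f J) = 0 := by
      apply Subtype.ext; show ((0 : A), (0 : B) * n) = (0 : A × B); simp
    rw [this]; exact zero_mem _
  | add x y hx hy ihx ihy =>
    intro n hn
    obtain ⟨h1, p1⟩ := ihx n hn
    obtain ⟨h2, p2⟩ := ihy n hn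
    have hmem : ((0 : A), (x + y) * n) ∈ amalg f J := by
      simp only [mem_amalg_iff, map_zero, sub_zero]
      exact J.mul_mem_left _ hn
    refine ⟨hmem, ?_⟩
    have : (⟨((0 : A), (x + y) * n), hmem⟩ : amalg f J)
        = ⟨((0 : A), x * n), h1⟩ + ⟨((0 : A), y * n), h2⟩ := by
      apply Subtype.ext
      show ((0 : A), (x + y) * n) = ((0 : A), x * n) + ((0 : A), y * n)
      simp [add_mul]
    rw [this]; exact add_mem p1 p2
  | smul b x hx ih =>
    intro n hn
    have h : (b • x) * n = x * (b * n) := by rw [smul_eq_mul]; ring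
    rw [h]
    exact ih (b * n) (J.mul_mem_left b hn)

lemma zero_beta_mem (f : A →+* B) (J : Ideal B) (I : Ideal A) {β : B}
    (hβ : β ∈ Ideal.map f I * J) :
    ∃ hm : ((0 : A), β) ∈ amalg f J, (⟨((0 : A), β), hm⟩ : amalg f J) ∈ Ideal.map (iota f J) I := by
  refine Submodule.mul_induction_on hβ (fun m hm n hn => zero_mn_mem f J I hm n hn) ?_
  rintro x y ⟨h1, p1⟩ ⟨h2, p2⟩
  have hmem : ((0 : A), x + y) ∈ amalg f J := by
    simp only [mem_amalg_iff, map_zero, sub_zero]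
    exact add_mem (by simpa [mem_amalg_iff] using h1) (by simpa [mem_amalg_iff] using h2)
  refine ⟨hmem, ?_⟩
  have : (⟨((0 : A), x + y), hmem⟩ : amalg f J)
      = ⟨((0 : A), x), h1⟩ + ⟨((0 : A), y), h2⟩ := by
    apply Subtype.ext
    show ((0 : A), x + y) = ((0 : A), x) + ((0 : A), y)
    simp
  rw [this]; exact add_mem p1 p2

end Aux


/-- (1) If `I` is an ideal of `A` and `H` an ideal of `f(A)+J` with `f(I)J ⊆ H ⊆ J`, then
`I ⋈^f H = {(i, f i + h) | i ∈ I, h ∈ H}` is an ideal of `A ⋈^f J`.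
(2) For any ideal `I` of `A`, the extension `I·(A ⋈^f J)` equals
`I ⋈^f (f(I)B)J = {(i, f i + β) | i ∈ I, β ∈ (f(I)B)J}`. -/
theorem stmt12 {A B : Type*} [CommRing A] [CommRing B] (f : A →+* B) (J : Ideal B) :
    (∀ (I : Ideal A) (H : Ideal (fAJ f J)),
      (∀ i ∈ I, ∀ j ∈ J, ∀ hm : f i * j ∈ fAJ f J, (⟨f i * j, hm⟩ : fAJ f J) ∈ H) →
      (∀ x : fAJ f J, x ∈ H → (x : B) ∈ J) →
      ∃ K : Ideal (amalg f J),
        (K : Set (amalg f J)) =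
          {x : amalg f J | ∃ i ∈ I, ∃ h : fAJ f J, h ∈ H ∧ (x : A × B) = (i, f i + h)}) ∧
    (∀ I : Ideal A,
      ((Ideal.map (iota f J) I : Ideal (amalg f J)) : Set (amalg f J)) =
        {x : amalg f J | ∃ i ∈ I, ∃ β ∈ Ideal.map f I * J, (x : A × B) = (i, f i + β)}) := by
  constructor
  · intro I H hIH hHJ
    refine ⟨{
      carrier := {x : amalg f J | (x : A × B).1 ∈ I ∧
        ∃ h : fAJ f J, h ∈ H ∧ (x : A × B).2 - f (x : A × B).1 = h},
      zero_mem' := ⟨I.zero_mem, 0, H.zero_mem, by simp⟩,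
      add_mem' := ?_,
      smul_mem' := ?_}, ?_⟩
    · rintro x y ⟨hx1, hx, hxH, hxe⟩ ⟨hy1, hy, hyH, hye⟩
      refine ⟨I.add_mem hx1 hy1, hx + hy, H.add_mem hxH hyH, ?_⟩
      push_cast
      simp only [Prod.fst_add, Prod.snd_add, map_add]
      linear_combination hxe + hye
    · rintro c x ⟨hx1, hx, hxH, hxe⟩
      have hj : (c : A × B).2 - f (c : A × B).1 ∈ J := c.2
      have hjfAJ : (c : A × B).2 - f (c : A × B).1 ∈ fAJ f J :=
        ⟨0, _, hj, by simp⟩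
      have hfij : f (x : A × B).1 * ((c : A × B).2 - f (c : A × B).1) ∈ fAJ f J :=
        ⟨0, f (x : A × B).1 * ((c : A × B).2 - f (c : A × B).1), J.mul_mem_left _ hj, by simp⟩
      refine ⟨I.mul_mem_left _ hx1,
        ⟨f (c : A × B).1, f_mem_fAJ f J _⟩ * hx + ⟨_, hjfAJ⟩ * hx + ⟨_, hfij⟩,
        add_mem (add_mem (H.mul_mem_left _ hxH) (H.mul_mem_left _ hxH))
          (hIH _ hx1 _ hj hfij), ?_⟩
      push_cast
      show ((c : A × B) * (x : A × B)).2 - f ((c : A × B) * (x : A × B)).1 = _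
      simp only [Prod.fst_mul, Prod.snd_mul, map_mul]
      linear_combination (c : A × B).2 * hxe
    · ext x
      simp only [SetLike.mem_coe, Set.mem_setOf_eq]
      constructor
      · rintro ⟨hx1, h, hH, he⟩
        exact ⟨_, hx1, h, hH, Prod.ext rfl (by rw [← he]; ring)⟩
      · rintro ⟨i, hi, h, hH, he⟩
        refine ⟨?_, h, hH, ?_⟩ <;> rw [he] <;> simp [hi]
  · intro I
    have hK : ∀ x : amalg f J, x ∈ Ideal.map (iota f J) I →
        (x : A × B).1 ∈ I ∧ (x : A × B).2 - f (x : A × B).1 ∈ Ideal.map f I * J := by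
      set IJ := Ideal.map f I * J with hIJ
      let K0 : Ideal (amalg f J) := {
        carrier := {x : amalg f J | (x : A × B).1 ∈ I ∧
          (x : A × B).2 - f (x : A × B).1 ∈ IJ},
        zero_mem' := by simp,
        add_mem' := by
          rintro x y ⟨hx1, hx2⟩ ⟨hy1, hy2⟩
          refine ⟨I.add_mem hx1 hy1, ?_⟩
          push_cast
          simp only [Prod.fst_add, Prod.snd_add, map_add]
          have h : (x : A × B).2 + (y : A × B).2 - (f (x : A × B).1 + f (y : A × B).1) =
              ((x : A × B).2 - f (x : A × B).1) + ((y : A × B).2 - f (y : A × B).1) := by ring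
          rw [h]; exact add_mem hx2 hy2,
        smul_mem' := by
          rintro c x ⟨hx1, hx2⟩
          have hj : (c : A × B).2 - f (c : A × B).1 ∈ J := c.2
          refine ⟨I.mul_mem_left _ hx1, ?_⟩
          have h : ((c : A × B) * (x : A × B)).2 - f (((c : A × B) * (x : A × B)).1) =
              (c : A × B).2 * ((x : A × B).2 - f (x : A × B).1)
              + f (x : A × B).1 * ((c : A × B).2 - f (c : A × B).1) := by
            simp only [Prod.fst_mul, Prod.snd_mul, map_mul]; ring
          show ((c : A × B) * (x : A × B)).2 - f (((c : A × B) * (x : A × B)).1) ∈ IJ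
          rw [h]
          exact add_mem (Ideal.mul_mem_left _ _ hx2)
            (Ideal.mul_mem_mul (Ideal.mem_map_of_mem f hx1) hj) }
      have hle : Ideal.map (iota f J) I ≤ K0 :=
        Ideal.map_le_iff_le_comap.mpr (fun i hi =>
          show ((iota f J i : A × B)).1 ∈ I ∧
              ((iota f J i : A × B)).2 - f ((iota f J i : A × B)).1 ∈ IJ from
            ⟨hi, show f i - f i ∈ IJ by simp⟩)
      exact fun x hx => hle hx
    ext x
    simp only [SetLike.mem_coe, Set.mem_setOf_eq]
    constructor
    · intro hx
      obtain ⟨hx1, hx2⟩ := hK x hx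
      exact ⟨_, hx1, _, hx2, Prod.ext rfl (by ring)⟩
    · rintro ⟨i, hi, β, hβ, he⟩
      obtain ⟨hm, hmem⟩ := zero_beta_mem f J I hβ
      have hx : x = iota f J i + ⟨((0 : A), β), hm⟩ := by
        apply Subtype.ext
        rw [he]
        show ((i : A), f i + β) = ((i, f i) : A × B) + ((0 : A), β)
        simp
      rw [hx]
      exact add_mem (Ideal.mem_map_of_mem _ hi) hmem
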